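/- Let (X_α)_{α<ω₁} be a tower of infinite subsets of ℕ with X := X_0 infinite and co-infinite. Let A = {ℕ \ X_α : α < ω₁} and let B be a family of infinite subsets of ℕ each of which is almost disjoint from X. Suppose g is a function mapping λ``A into λ``B such that there are infinitely many n ∈ X with g``(λ``A ∩ λ``[x(n)=1]) ⊆ ⋃_{m ∈ X, m ≥ n} λ``[x(m)=1]. Then the tower (X_α)_{α<ω₁} has a pseudointersection. -/

import Mathlib

/-!
For `α < ω₁` let `y` be the characteristic function of `ℕ \ X α`, so `λ y ∈ λ''A` and
`g (λ y) = λ Y` for some `Y ∈ B`. If one of the infinitely many good `n ∈ X 0` lies outside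
`X α`, then `y n = 1`, so `λ Y ∈ λ''[x(m)=1]` for some `m ≥ n` in `X 0`. Since `Y` is infinite
and (being almost disjoint from the infinite set `X 0`) co-infinite, `λ` is injective at `Y`,
so `m ∈ Y ∩ X 0`. This set is finite, which bounds `n`: the good `n` form a pseudointersection.
-/

/-- The Cantor–Lebesgue map `λ : 2^ω → [0,1]`, `λ x = Σ_n x(n)/2^(n+1)`. -/
noncomputable def cantorLebesgue (x : ℕ → Bool) : ℝ :=
  ∑' n : ℕ, (if x n = true then (1 : ℝ) else 0) / 2 ^ (n + 1)

noncomputable def cantorLebesgueTerm (x : ℕ → Bool) (n : ℕ) : ℝ :=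
  (if x n = true then (1 : ℝ) else 0) / 2 ^ (n + 1)

lemma cantorLebesgue_eq_tsum (x : ℕ → Bool) :
    cantorLebesgue x = ∑' n, cantorLebesgueTerm x n := rfl

lemma cantorLebesgueTerm_nonneg (x : ℕ → Bool) (n : ℕ) : 0 ≤ cantorLebesgueTerm x n := by
  unfold cantorLebesgueTerm; positivity

lemma cantorLebesgueTerm_add_cantorLebesgueTerm_not (x : ℕ → Bool) (n : ℕ) :
    cantorLebesgueTerm x n + cantorLebesgueTerm (fun k => !x k) n = 1 / 2 / 2 ^ n := by
  cases h : x n <;> simp [cantorLebesgueTerm, h, pow_succ] <;> ring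

lemma cantorLebesgueTerm_le (x : ℕ → Bool) (n : ℕ) : cantorLebesgueTerm x n ≤ 1 / 2 / 2 ^ n := by
  rw [← cantorLebesgueTerm_add_cantorLebesgueTerm_not x n]
  exact le_add_of_nonneg_right (cantorLebesgueTerm_nonneg _ n)

lemma summable_cantorLebesgueTerm (x : ℕ → Bool) : Summable (cantorLebesgueTerm x) :=
  (summable_geometric_two' 1).of_nonneg_of_le (cantorLebesgueTerm_nonneg x)
    (cantorLebesgueTerm_le x)

lemma cantorLebesgueTerm_add (x : ℕ → Bool) (n k : ℕ) :
    cantorLebesgueTerm x (k + n) = cantorLebesgueTerm (fun i => x (i + n)) k / 2 ^ n := by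
  simp only [cantorLebesgueTerm, pow_add, div_div]
  ring_nf

lemma cantorLebesgue_add_cantorLebesgue_not (x : ℕ → Bool) :
    cantorLebesgue x + cantorLebesgue (fun k => !x k) = 1 := by
  rw [cantorLebesgue_eq_tsum, cantorLebesgue_eq_tsum,
    ← (summable_cantorLebesgueTerm x).tsum_add (summable_cantorLebesgueTerm _)]
  simp only [cantorLebesgueTerm_add_cantorLebesgueTerm_not]
  exact tsum_geometric_two' 1

lemma cantorLebesgue_nonneg (x : ℕ → Bool) : 0 ≤ cantorLebesgue x :=
  tsum_nonneg (cantorLebesgueTerm_nonneg x)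

lemma cantorLebesgue_pos {x : ℕ → Bool} {k : ℕ} (hk : x k = true) : 0 < cantorLebesgue x :=
  (summable_cantorLebesgueTerm x).tsum_pos (cantorLebesgueTerm_nonneg x) k
    (by simp [cantorLebesgueTerm, hk])

lemma cantorLebesgue_le_one (x : ℕ → Bool) : cantorLebesgue x ≤ 1 := by
  linarith [cantorLebesgue_add_cantorLebesgue_not x, cantorLebesgue_nonneg (fun k => !x k)]

lemma cantorLebesgue_lt_one {x : ℕ → Bool} {k : ℕ} (hk : x k = false) : cantorLebesgue x < 1 := by
  have : 0 < cantorLebesgue (fun k => !x k) := cantorLebesgue_pos (k := k) (by simp [hk])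
  linarith [cantorLebesgue_add_cantorLebesgue_not x]

lemma cantorLebesgue_eq_sum_add_shift (x : ℕ → Bool) (n : ℕ) :
    cantorLebesgue x = ∑ k ∈ Finset.range n, cantorLebesgueTerm x k +
      cantorLebesgue (fun i => x (i + n)) / 2 ^ n := by
  rw [cantorLebesgue_eq_tsum, ← (summable_cantorLebesgueTerm x).sum_add_tsum_nat_add n]
  simp only [cantorLebesgueTerm_add, tsum_div_const, cantorLebesgue_eq_tsum]

/-- `λ` is monotone for the lexicographic order; it fails to be strictly so only at a pair
`(s 0 1 1 1 …, s 1 0 0 0 …)` of dyadic representations of the same number. -/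
lemma cantorLebesgue_lt_of_lex {a b : ℕ → Bool} {n : ℕ} (hlt : ∀ k < n, a k = b k)
    (ha : a n = false) (hb : b n = true)
    (htail : (∃ k > n, a k = false) ∨ (∃ k > n, b k = true)) :
    cantorLebesgue a < cantorLebesgue b := by
  set A := cantorLebesgue (fun i => a (i + (n + 1)))
  set B := cantorLebesgue (fun i => b (i + (n + 1)))
  have htails : A < 1 + B := by
    rcases htail with ⟨k, hkn, hk⟩ | ⟨k, hkn, hk⟩
    · have : A < 1 := cantorLebesgue_lt_one (k := k - (n + 1)) (by rwa [Nat.sub_add_cancel hkn])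
      linarith [cantorLebesgue_nonneg (fun i => b (i + (n + 1)))]
    · have : 0 < B := cantorLebesgue_pos (k := k - (n + 1)) (by rwa [Nat.sub_add_cancel hkn])
      linarith [cantorLebesgue_le_one (fun i => a (i + (n + 1)))]
  have hhead : ∑ k ∈ Finset.range n, cantorLebesgueTerm a k =
      ∑ k ∈ Finset.range n, cantorLebesgueTerm b k :=
    Finset.sum_congr rfl fun k hk => by
      rw [cantorLebesgueTerm, cantorLebesgueTerm, hlt k (Finset.mem_range.mp hk)]
  have han : cantorLebesgueTerm a n = 0 := by simp [cantorLebesgueTerm, ha]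
  have hbn : cantorLebesgueTerm b n = 1 / 2 ^ (n + 1) := by simp [cantorLebesgueTerm, hb]
  rw [cantorLebesgue_eq_sum_add_shift a (n + 1), cantorLebesgue_eq_sum_add_shift b (n + 1),
    Finset.sum_range_succ, Finset.sum_range_succ, hhead, han, hbn, add_zero, add_assoc, ← add_div]
  gcongr

lemma eq_of_cantorLebesgue_eq {a b : ℕ → Bool} (ha₁ : {n | a n = true}.Infinite)
    (ha₀ : {n | a n = false}.Infinite) (h : cantorLebesgue a = cantorLebesgue b) : a = b := by
  classical
  by_contra hne
  have hex : ∃ n, a n ≠ b n := Function.ne_iff.mp hne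
  set n := Nat.find hex
  have hlt : ∀ k < n, a k = b k := fun k hk => not_not.mp (Nat.find_min hex hk)
  obtain ⟨k₁, hk₁, hnk₁⟩ := ha₁.exists_gt n
  obtain ⟨k₀, hk₀, hnk₀⟩ := ha₀.exists_gt n
  have hdiff : a n ≠ b n := Nat.find_spec hex
  cases han : a n <;> cases hbn : b n <;> simp only [han, hbn, ne_eq, not_true_eq_false] at hdiff
  · exact (cantorLebesgue_lt_of_lex hlt han hbn (Or.inl ⟨k₀, hnk₀, hk₀⟩)).ne h
  · exact (cantorLebesgue_lt_of_lex (fun k hk => (hlt k hk).symm) hbn han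
      (Or.inr ⟨k₁, hnk₁, hk₁⟩)).ne' h

lemma apply_eq_true_of_cantorLebesgue_mem_image {a : ℕ → Bool} {m : ℕ}
    (ha₁ : {n | a n = true}.Infinite) (ha₀ : {n | a n = false}.Infinite)
    (h : cantorLebesgue a ∈ cantorLebesgue '' {y | y m = true}) : a m = true := by
  obtain ⟨b, hb, hab⟩ := h
  rwa [eq_of_cantorLebesgue_eq ha₁ ha₀ hab.symm]

lemma infinite_setOf_eq_false_of_inter_finite {α : Type*} {Y : α → Bool} {s : Set α}
    (hs : s.Infinite) (h : ({n | Y n = true} ∩ s).Finite) : {n | Y n = false}.Infinite :=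
  (hs.sdiff h).mono fun n hn => by simpa [hn.1] using hn.2

theorem stmt4_general
    (X : Ordinal → Set ℕ)
    (hX0inf : (X 0).Infinite)
    (A B : Set (ℕ → Bool))
    (hA : A = {y : ℕ → Bool | ∃ α < (Cardinal.aleph 1).ord, ∀ n : ℕ, y n = true ↔ n ∉ X α})
    (hBinf : ∀ Y ∈ B, {n : ℕ | Y n = true}.Infinite)
    (hBad : ∀ Y ∈ B, ({n : ℕ | Y n = true} ∩ X 0).Finite)
    (g : ℝ → ℝ)
    (hg : ∀ r ∈ cantorLebesgue '' A, g r ∈ cantorLebesgue '' B)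
    (hinf : {n ∈ X 0 | ∀ r ∈ cantorLebesgue '' A ∩ cantorLebesgue '' {y : ℕ → Bool | y n = true},
        g r ∈ ⋃ m ∈ {m ∈ X 0 | n ≤ m},
          cantorLebesgue '' {y : ℕ → Bool | y m = true}}.Infinite) :
    ∃ S : Set ℕ, S.Infinite ∧ ∀ α < (Cardinal.aleph 1).ord, (S \ X α).Finite := by
  classical
  refine ⟨_, hinf, fun α hα => ?_⟩
  set y : ℕ → Bool := fun n => decide (n ∉ X α)
  have hyA : cantorLebesgue y ∈ cantorLebesgue '' A :=
    ⟨y, hA ▸ ⟨α, hα, fun n => by simp [y]⟩, rfl⟩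
  obtain ⟨Y, hYB, hYy⟩ := hg _ hyA
  have hY₀ := infinite_setOf_eq_false_of_inter_finite hX0inf (hBad Y hYB)
  obtain ⟨N, hN⟩ := (hBad Y hYB).bddAbove
  refine (Set.finite_Iic N).subset fun n ⟨⟨_, hn⟩, hnX⟩ => ?_
  have hgy := hn _ ⟨hyA, y, by simpa [y] using hnX, rfl⟩
  simp only [Set.mem_iUnion, Set.mem_ofPred_eq, exists_prop] at hgy
  obtain ⟨m, ⟨hm, hnm⟩, hgm⟩ := hgy
  rw [← hYy] at hgm
  exact hnm.trans (hN ⟨apply_eq_true_of_cantorLebesgue_mem_image (hBinf Y hYB) hY₀ hgm, hm⟩)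

/-- towers, complements and the Cantor–Lebesgue map.  If `g` maps
`λ``A` into `λ``B` and for infinitely many `n ∈ X` the image under `g` of
`λ``A ∩ λ``[x(n)=1]` is contained in `⋃_{m ∈ X, m ≥ n} λ``[x(m)=1]`, then the
tower has a pseudointersection. -/
theorem stmt4
    (X : Ordinal → Set ℕ)
    (htower_inf : ∀ α < (Cardinal.aleph 1).ord, (X α).Infinite)
    (htower : ∀ α β : Ordinal, α < β → β < (Cardinal.aleph 1).ord → (X β \ X α).Finite)
    (hX0inf : (X 0).Infinite) (hX0coinf : (X 0)ᶜ.Infinite)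
    (A B : Set (ℕ → Bool))
    (hA : A = {y : ℕ → Bool | ∃ α < (Cardinal.aleph 1).ord, ∀ n : ℕ, y n = true ↔ n ∉ X α})
    (hBinf : ∀ Y ∈ B, {n : ℕ | Y n = true}.Infinite)
    (hBad : ∀ Y ∈ B, ({n : ℕ | Y n = true} ∩ X 0).Finite)
    (g : ℝ → ℝ)
    (hg : ∀ r ∈ cantorLebesgue '' A, g r ∈ cantorLebesgue '' B)
    (hinf : {n ∈ X 0 | ∀ r ∈ cantorLebesgue '' A ∩ cantorLebesgue '' {y : ℕ → Bool | y n = true},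
        g r ∈ ⋃ m ∈ {m ∈ X 0 | n ≤ m},
          cantorLebesgue '' {y : ℕ → Bool | y m = true}}.Infinite) :
    ∃ S : Set ℕ, S.Infinite ∧ ∀ α < (Cardinal.aleph 1).ord, (S \ X α).Finite :=
  stmt4_general X hX0inf A B hA hBinf hBad g hg hinf
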